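/- arXiv:2512.08806 — 3 statements merged into one kernel-verified Lean document; each statement's English description precedes it below -/
import Mathlib

section
/- Given linearly independent vectors $f, g$ in a Hilbert space $L_2(\mu)$, there exist orthogonal vectors $f', g' \in \mathrm{span}\{f,g\}$ such that $\inf_{|\alpha|=1}\|f - \alpha g\| = \inf_{|\alpha|=1}\|f' - \alpha g'\|$ and $\| |f'| - |g'| \| \leq \| |f| - |g| \|$. -/
open MeasureTheory
open scoped ENNReal

/-- The quotient distance `inf_{|α|=1} ‖f - α g‖` modulo a global unimodular phase. -/
noncomputable def phaseDist (𝕜 : Type*) {E : Type*} [RCLike 𝕜] [NormedAddCommGroup E]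
    [NormedSpace 𝕜 E] (f g : E) : ℝ :=
  ⨅ α : {a : 𝕜 // ‖a‖ = 1}, ‖f - (α : 𝕜) • g‖

section Aux

open RCLike

lemma core_ineq (r m τ ε d : ℝ) (hd : d ^ 2 = 1 - 4 * ε ^ 2) (hε0 : 0 ≤ ε)
    (hτ : Real.sqrt (r ^ 2 + m ^ 2) ≤ τ) :
    (1 + 2 * ε) * (Real.sqrt (r ^ 2 + m ^ 2) - r) + (r - 2 * ε * τ)
      ≤ Real.sqrt ((r - 2 * ε * τ) ^ 2 + d ^ 2 * m ^ 2) := by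
  set ρ := Real.sqrt (r ^ 2 + m ^ 2) with hρ
  have hρ0 : 0 ≤ ρ := Real.sqrt_nonneg _
  have hρ2 : ρ ^ 2 = r ^ 2 + m ^ 2 := Real.sq_sqrt (by positivity)
  have hρr : r ≤ ρ := by
    nlinarith [Real.sqrt_le_sqrt (show r ^ 2 ≤ r ^ 2 + m ^ 2 by nlinarith),
      Real.sqrt_sq_eq_abs r, le_abs_self r]
  rcases le_or_gt ((1 + 2 * ε) * (ρ - r) + (r - 2 * ε * τ)) 0 with h | h
  · exact le_trans h (Real.sqrt_nonneg _)
  · rw [Real.le_sqrt h.le (by positivity)]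
    nlinarith [mul_nonneg (mul_nonneg (mul_nonneg hε0 (by linarith : (0:ℝ) ≤ 1 + 2 * ε))
      (sub_nonneg.2 hτ)) (sub_nonneg.2 hρr)]

variable {𝕜 : Type*} [RCLike 𝕜]

/-- Pointwise key inequality for the construction. -/
lemma key_pointwise (x y : 𝕜) (a b ε : ℝ)
    (hone : a ^ 2 + b ^ 2 = 1) (hab : a * b = -ε) (hε0 : 0 ≤ ε) :
    (1 + 2 * ε) * (‖x‖ * ‖y‖ - re ((starRingEnd 𝕜) x * y))
        + (re ((starRingEnd 𝕜) x * y) - ε * (‖x‖ ^ 2 + ‖y‖ ^ 2))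
      ≤ ‖(a : 𝕜) * x + (b : 𝕜) * y‖ * ‖(b : 𝕜) * x + (a : 𝕜) * y‖ := by
  set z : 𝕜 := (starRingEnd 𝕜) x * y with hzdef
  set r : ℝ := re z with hrdef
  set m : ℝ := im z with hmdef
  have hznorm : ‖z‖ = ‖x‖ * ‖y‖ := by rw [hzdef, norm_mul, norm_conj]
  have hρ2 : r ^ 2 + m ^ 2 = (‖x‖ * ‖y‖) ^ 2 := by
    rw [← hznorm, ← normSq_eq_def', normSq_apply, hrdef, hmdef]; ring
  set W : 𝕜 := ((a : 𝕜) * x + (b : 𝕜) * y) * (starRingEnd 𝕜) ((b : 𝕜) * x + (a : 𝕜) * y)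
    with hWdef
  have hWnorm : ‖(a : 𝕜) * x + (b : 𝕜) * y‖ * ‖(b : 𝕜) * x + (a : 𝕜) * y‖ = ‖W‖ := by
    rw [hWdef, norm_mul, norm_conj]
  have hx : x * (starRingEnd 𝕜) x = ((‖x‖ ^ 2 : ℝ) : 𝕜) := by
    rw [mul_conj]; norm_cast
  have hy : y * (starRingEnd 𝕜) y = ((‖y‖ ^ 2 : ℝ) : 𝕜) := by
    rw [mul_conj]; norm_cast
  have hWexp : W = ((a * b : ℝ) : 𝕜) * (((‖x‖ ^ 2 + ‖y‖ ^ 2 : ℝ)) : 𝕜)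
      + ((a ^ 2 : ℝ) : 𝕜) * ((starRingEnd 𝕜) z) + ((b ^ 2 : ℝ) : 𝕜) * z := by
    rw [hWdef, hzdef, map_add, map_mul, map_mul, conj_ofReal, conj_ofReal, map_mul, conj_conj]
    rw [show (((‖x‖ ^ 2 + ‖y‖ ^ 2 : ℝ)) : 𝕜) = x * (starRingEnd 𝕜) x + y * (starRingEnd 𝕜) y by
      rw [hx, hy]; push_cast; ring]
    push_cast
    ring
  have hre : re W = r - 2 * ε * ((‖x‖ ^ 2 + ‖y‖ ^ 2) / 2) := by
    rw [hWexp, map_add, map_add, re_ofReal_mul, re_ofReal_mul, re_ofReal_mul, ofReal_re,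
      conj_re, ← hrdef]
    have : a ^ 2 * r + b ^ 2 * r = r := by linear_combination r * hone
    linear_combination (‖x‖ ^ 2 + ‖y‖ ^ 2) * hab + this
  have him : im W ^ 2 = (a ^ 2 - b ^ 2) ^ 2 * m ^ 2 := by
    rw [hWexp, map_add, map_add, im_ofReal_mul, im_ofReal_mul, im_ofReal_mul, ofReal_im,
      conj_im, ← hmdef]
    ring
  have hWval : ‖W‖ = Real.sqrt ((r - 2 * ε * ((‖x‖ ^ 2 + ‖y‖ ^ 2) / 2)) ^ 2
      + (a ^ 2 - b ^ 2) ^ 2 * m ^ 2) := by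
    rw [← hre, ← him,
      show re W ^ 2 + im W ^ 2 = ‖W‖ ^ 2 by rw [← normSq_eq_def', normSq_apply]; ring,
      Real.sqrt_sq (norm_nonneg _)]
  have hsqrt : Real.sqrt (r ^ 2 + m ^ 2) = ‖x‖ * ‖y‖ := by
    rw [hρ2, Real.sqrt_sq (by positivity)]
  have hd : (a ^ 2 - b ^ 2) ^ 2 = 1 - 4 * ε ^ 2 := by nlinarith [hone, hab]
  have hτ : Real.sqrt (r ^ 2 + m ^ 2) ≤ (‖x‖ ^ 2 + ‖y‖ ^ 2) / 2 := by
    rw [hsqrt]; nlinarith [sq_nonneg (‖x‖ - ‖y‖)]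
  have core := core_ineq r m ((‖x‖ ^ 2 + ‖y‖ ^ 2) / 2) ε (a ^ 2 - b ^ 2) hd hε0 hτ
  rw [hsqrt] at core
  calc (1 + 2 * ε) * (‖x‖ * ‖y‖ - re ((starRingEnd 𝕜) x * y))
        + (re ((starRingEnd 𝕜) x * y) - ε * (‖x‖ ^ 2 + ‖y‖ ^ 2))
      = (1 + 2 * ε) * (‖x‖ * ‖y‖ - r) + (r - 2 * ε * ((‖x‖ ^ 2 + ‖y‖ ^ 2) / 2)) := by
        rw [hrdef, hzdef]; ring
    _ ≤ Real.sqrt ((r - 2 * ε * ((‖x‖ ^ 2 + ‖y‖ ^ 2) / 2)) ^ 2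
        + (a ^ 2 - b ^ 2) ^ 2 * m ^ 2) := core
    _ = ‖W‖ := hWval.symm
    _ = ‖(a : 𝕜) * x + (b : 𝕜) * y‖ * ‖(b : 𝕜) * x + (a : 𝕜) * y‖ := hWnorm.symm

variable {E : Type*} [NormedAddCommGroup E] [InnerProductSpace 𝕜 E]

local notation "⟪" x ", " y "⟫" => @inner 𝕜 _ _ x y

lemma phaseDist_bddBelow (u v : E) :
    BddBelow (Set.range fun α : {a : 𝕜 // ‖a‖ = 1} => ‖u - (α : 𝕜) • v‖) := by
  refine ⟨0, ?_⟩
  rintro x ⟨β, rfl⟩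
  exact norm_nonneg _

lemma phaseDist_le (u v : E) (α : 𝕜) (hα : ‖α‖ = 1) : phaseDist 𝕜 u v ≤ ‖u - α • v‖ :=
  ciInf_le (phaseDist_bddBelow u v) (⟨α, hα⟩ : {a : 𝕜 // ‖a‖ = 1})

lemma norm_sub_unit_smul_sq (u v : E) (α : 𝕜) (hα : ‖α‖ = 1) :
    ‖u - α • v‖ ^ 2 = ‖u‖ ^ 2 + ‖v‖ ^ 2 - 2 * re (α * ⟪u, v⟫) := by
  have h2 := @norm_sub_sq 𝕜 _ _ _ _ u (α • v)
  rw [norm_smul, hα, one_mul, inner_smul_right] at h2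
  linarith

lemma phaseDist_eq (u v : E) :
    phaseDist 𝕜 u v = Real.sqrt (‖u‖ ^ 2 + ‖v‖ ^ 2 - 2 * ‖⟪u, v⟫‖) := by
  set z : 𝕜 := ⟪u, v⟫ with hz
  apply le_antisymm
  · set α : 𝕜 := if z = 0 then 1 else (‖z‖ : 𝕜) / z with hα
    have hαn : ‖α‖ = 1 := by
      rw [hα]
      split_ifs with h
      · exact norm_one
      · rw [norm_div, norm_ofReal, abs_norm, div_self (norm_ne_zero_iff.2 h)]
    have hre : re (α * z) = ‖z‖ := by
      rw [hα]
      split_ifs with h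
      · simp [h]
      · rw [div_mul_cancel₀ _ h, ofReal_re]
    refine le_trans (phaseDist_le u v α hαn) ?_
    have h3 := norm_sub_unit_smul_sq u v α hαn
    rw [hre] at h3
    rw [← Real.sqrt_sq (norm_nonneg (u - α • v)), h3]
  · have : Nonempty {a : 𝕜 // ‖a‖ = 1} := ⟨⟨1, norm_one⟩⟩
    apply le_ciInf
    rintro ⟨α, hαn⟩
    have h1 := norm_sub_unit_smul_sq u v α hαn
    have h2 : re (α * z) ≤ ‖z‖ := by
      calc re (α * z) ≤ ‖α * z‖ := re_le_norm _
        _ = ‖z‖ := by rw [norm_mul, hαn, one_mul]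
    have h4 : ‖u‖ ^ 2 + ‖v‖ ^ 2 - 2 * ‖z‖ ≤ ‖u - α • v‖ ^ 2 := by linarith
    calc Real.sqrt (‖u‖ ^ 2 + ‖v‖ ^ 2 - 2 * ‖z‖) ≤ Real.sqrt (‖u - α • v‖ ^ 2) :=
          Real.sqrt_le_sqrt h4
      _ = ‖u - α • v‖ := Real.sqrt_sq (norm_nonneg _)

end Aux

set_option maxHeartbeats 1000000 in
/-- Given linearly independent `f, g ∈ L₂(μ)` there are orthogonal
`f', g' ∈ span{f, g}` with the same quotient distance and `‖ |f'| - |g'| ‖ ≤ ‖ |f| - |g| ‖`. -/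
theorem stmt2 {Ω 𝕜 : Type*} [MeasurableSpace Ω] [RCLike 𝕜] (μ : Measure Ω)
    (f g : Lp 𝕜 2 μ) (hli : LinearIndependent 𝕜 ![f, g]) :
    ∃ f' g' : Lp 𝕜 2 μ,
      f' ∈ Submodule.span 𝕜 ({f, g} : Set (Lp 𝕜 2 μ)) ∧
      g' ∈ Submodule.span 𝕜 ({f, g} : Set (Lp 𝕜 2 μ)) ∧
      (inner 𝕜 f' g' : 𝕜) = 0 ∧
      phaseDist 𝕜 f g = phaseDist 𝕜 f' g' ∧
      eLpNorm (fun ω => ‖(f' : Ω → 𝕜) ω‖ - ‖(g' : Ω → 𝕜) ω‖) 2 μ ≤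
        eLpNorm (fun ω => ‖(f : Ω → 𝕜) ω‖ - ‖(g : Ω → 𝕜) ω‖) 2 μ := by
  classical
  rw [linearIndependent_fin2] at hli
  simp only [Matrix.cons_val_one, Matrix.head_cons, Matrix.cons_val_zero] at hli
  obtain ⟨hg0, hfg⟩ := hli
  have hf0 : f ≠ 0 := fun h => hfg 0 (by rw [zero_smul, h])
  -- the aligned phase
  set z0 : 𝕜 := inner 𝕜 f g with hz0
  set c : ℝ := ‖z0‖ with hcdef
  have hc0 : (0:ℝ) ≤ c := norm_nonneg _
  set α : 𝕜 := if z0 = 0 then 1 else (c : 𝕜) / z0 with hαdef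
  have hα : ‖α‖ = 1 := by
    rw [hαdef]
    split_ifs with h
    · exact norm_one
    · rw [norm_div, RCLike.norm_ofReal, hcdef, abs_norm, div_self (norm_ne_zero_iff.2 h)]
  have hα0 : α ≠ 0 := by intro h; rw [h, norm_zero] at hα; norm_num at hα
  set v : Lp 𝕜 2 μ := α • g with hvdef
  have hfv : (inner 𝕜 f v : 𝕜) = ((c:ℝ) : 𝕜) := by
    rw [hvdef, inner_smul_right, ← hz0, hαdef]
    split_ifs with h
    · rw [h, mul_zero, hcdef, h, norm_zero, RCLike.ofReal_zero]
    · rw [div_mul_cancel₀ _ h]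
  have hvg_norm : ‖v‖ = ‖g‖ := by rw [hvdef, norm_smul, hα, one_mul]
  have hfvne : f ≠ v := by rw [hvdef]; exact (hfg α).symm
  set A : ℝ := ‖f‖ ^ 2 with hAdef
  set B : ℝ := ‖g‖ ^ 2 with hBdef
  have hA0 : 0 < A := by
    have : ‖f‖ ≠ 0 := norm_ne_zero_iff.2 hf0
    rw [hAdef]; positivity
  have hB0 : 0 < B := by
    have : ‖g‖ ≠ 0 := norm_ne_zero_iff.2 hg0
    rw [hBdef]; positivity
  have hScpos : 0 < A + B - 2 * c := by
    have h1 := @norm_sub_sq 𝕜 _ _ _ _ f v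
    rw [hfv, RCLike.ofReal_re, hvg_norm] at h1
    have h2 : 0 < ‖f - v‖ := norm_pos_iff.2 (sub_ne_zero.2 hfvne)
    nlinarith
  have hS0 : 0 < A + B := by linarith
  set ε : ℝ := c / (A + B) with hεdef
  have hε0 : 0 ≤ ε := div_nonneg hc0 hS0.le
  have hεS : ε * (A + B) = c := by rw [hεdef]; field_simp
  have hε1 : 2 * ε < 1 := by
    calc 2 * ε = (2 * c) / (A + B) := by rw [hεdef]; ring
      _ < 1 := (div_lt_one hS0).2 (by linarith)
  have hε4 : 0 ≤ 1 - 4 * ε ^ 2 := by nlinarith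
  set β : ℝ := Real.sqrt (1 - 4 * ε ^ 2) with hβdef
  have hβ0 : 0 ≤ β := Real.sqrt_nonneg _
  have hβsq : β ^ 2 = 1 - 4 * ε ^ 2 := Real.sq_sqrt hε4
  have hβ1 : β ≤ 1 := by
    rw [hβdef]
    calc Real.sqrt (1 - 4 * ε ^ 2) ≤ Real.sqrt 1 := Real.sqrt_le_sqrt (by nlinarith)
      _ = 1 := Real.sqrt_one
  set a : ℝ := Real.sqrt ((1 + β) / 2) with hadef
  set b : ℝ := -Real.sqrt ((1 - β) / 2) with hbdef
  have ha2 : a ^ 2 = (1 + β) / 2 := Real.sq_sqrt (by linarith)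
  have hb2 : b ^ 2 = (1 - β) / 2 := by
    rw [hbdef, neg_sq]
    exact Real.sq_sqrt (by linarith)
  have hone : a ^ 2 + b ^ 2 = 1 := by rw [ha2, hb2]; ring
  have hab : a * b = -ε := by
    have h1 : (0:ℝ) ≤ (1 + β) / 2 := by linarith
    have h2 : (1 + β) / 2 * ((1 - β) / 2) = ε ^ 2 := by linear_combination (-1/4 : ℝ) * hβsq
    rw [hadef, hbdef, mul_neg, ← Real.sqrt_mul h1, h2, Real.sqrt_sq hε0]
  have ha0 : 0 < a := Real.sqrt_pos.2 (by linarith)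
  have haK : ((a:ℝ):𝕜) ≠ 0 := by
    rw [ne_eq, RCLike.ofReal_eq_zero]; exact ha0.ne'
  -- the orthogonal pair before scaling
  set p : Lp 𝕜 2 μ := ((a:ℝ):𝕜) • f + ((b:ℝ):𝕜) • v with hpdef
  set q : Lp 𝕜 2 μ := ((b:ℝ):𝕜) • f + ((a:ℝ):𝕜) • v with hqdef
  have e_ff : (inner 𝕜 f f : 𝕜) = ((A:ℝ) : 𝕜) := by
    rw [inner_self_eq_norm_sq_to_K, hAdef]; norm_cast
  have e_vv : (inner 𝕜 v v : 𝕜) = ((B:ℝ) : 𝕜) := by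
    rw [inner_self_eq_norm_sq_to_K, hvg_norm, hBdef]; norm_cast
  have e_vf : (inner 𝕜 v f : 𝕜) = ((c:ℝ) : 𝕜) := by
    rw [← inner_conj_symm, hfv, RCLike.conj_ofReal]
  have expand : ∀ s t s' t' : ℝ,
      (inner 𝕜 (((s:ℝ):𝕜) • f + ((t:ℝ):𝕜) • v) (((s':ℝ):𝕜) • f + ((t':ℝ):𝕜) • v) : 𝕜)
        = ((s * s' * A + (s * t' + t * s') * c + t * t' * B : ℝ) : 𝕜) := by
    intro s t s' t'
    simp only [inner_add_left, inner_add_right, inner_smul_left, inner_smul_right,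
      e_ff, e_vv, hfv, e_vf, RCLike.conj_ofReal]
    push_cast
    ring
  have hpq0 : (inner 𝕜 p q : 𝕜) = 0 := by
    rw [hpdef, hqdef, expand a b b a,
      show a * b * A + (a * a + b * b) * c + b * a * B = 0 by nlinarith [hεS, hone, hab]]
    exact RCLike.ofReal_zero
  have hnp2 : ‖p‖ ^ 2 = a ^ 2 * A + 2 * (a * b) * c + b ^ 2 * B := by
    have h1 : (inner 𝕜 p p : 𝕜) = ((a * a * A + (a * b + b * a) * c + b * b * B : ℝ) : 𝕜) := by
      rw [hpdef, expand a b a b]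
    have h2 := inner_self_eq_norm_sq (𝕜 := 𝕜) p
    rw [h1, RCLike.ofReal_re] at h2
    rw [← h2]; ring
  have hnq2 : ‖q‖ ^ 2 = b ^ 2 * A + 2 * (a * b) * c + a ^ 2 * B := by
    have h1 : (inner 𝕜 q q : 𝕜) = ((b * b * A + (b * a + a * b) * c + a * a * B : ℝ) : 𝕜) := by
      rw [hqdef, expand b a b a]
    have h2 := inner_self_eq_norm_sq (𝕜 := 𝕜) q
    rw [h1, RCLike.ofReal_re] at h2
    rw [← h2]; ring
  have hp_ne : p ≠ 0 := by
    intro hP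
    have h1 : ((a:ℝ):𝕜) • f + (((b:ℝ):𝕜) * α) • g = 0 := by
      rw [← smul_smul, ← hvdef, ← hpdef]; exact hP
    apply hfg (-(((b:ℝ):𝕜) * α) / ((a:ℝ):𝕜))
    apply smul_right_injective (Lp 𝕜 2 μ) haK
    show ((a:ℝ):𝕜) • ((-(((b:ℝ):𝕜) * α) / ((a:ℝ):𝕜)) • g) = ((a:ℝ):𝕜) • f
    rw [smul_smul, show ((a:ℝ):𝕜) * (-(((b:ℝ):𝕜) * α) / ((a:ℝ):𝕜)) = -(((b:ℝ):𝕜) * α) by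
      field_simp]
    rw [neg_smul]
    exact (eq_neg_of_add_eq_zero_left h1).symm
  have hq_ne : q ≠ 0 := by
    intro hQ
    have h1 : ((b:ℝ):𝕜) • f + (((a:ℝ):𝕜) * α) • g = 0 := by
      rw [← smul_smul, ← hvdef, ← hqdef]; exact hQ
    by_cases hb0 : ((b:ℝ):𝕜) = 0
    · rw [hb0, zero_smul, zero_add, smul_eq_zero] at h1
      rcases h1 with h1 | h1
      · exact (mul_ne_zero haK hα0) h1
      · exact hg0 h1
    · apply hfg (-(((a:ℝ):𝕜) * α) / ((b:ℝ):𝕜))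
      apply smul_right_injective (Lp 𝕜 2 μ) hb0
      show ((b:ℝ):𝕜) • ((-(((a:ℝ):𝕜) * α) / ((b:ℝ):𝕜)) • g) = ((b:ℝ):𝕜) • f
      rw [smul_smul, show ((b:ℝ):𝕜) * (-(((a:ℝ):𝕜) * α) / ((b:ℝ):𝕜)) = -(((a:ℝ):𝕜) * α) by
        field_simp]
      rw [neg_smul]
      exact (eq_neg_of_add_eq_zero_left h1).symm
  -- the scaled pair
  set D : ℝ := Real.sqrt (A + B - 2 * c) with hDdef
  have hD2 : D ^ 2 = A + B - 2 * c := Real.sq_sqrt hScpos.le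
  have hD0 : 0 < D := Real.sqrt_pos.2 hScpos
  have hnp0 : 0 < ‖p‖ := norm_pos_iff.2 hp_ne
  have hnq0 : 0 < ‖q‖ := norm_pos_iff.2 hq_ne
  have hs20 : 0 < Real.sqrt 2 := by positivity
  have hs2 : Real.sqrt 2 ^ 2 = 2 := Real.sq_sqrt (by norm_num)
  set lam : ℝ := D / (Real.sqrt 2 * ‖p‖) with hlamdef
  set nu : ℝ := D / (Real.sqrt 2 * ‖q‖) with hnudef
  have hlam0 : 0 < lam := by rw [hlamdef]; exact div_pos hD0 (mul_pos hs20 hnp0)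
  have hnu0 : 0 < nu := by rw [hnudef]; exact div_pos hD0 (mul_pos hs20 hnq0)
  set f' : Lp 𝕜 2 μ := ((lam:ℝ):𝕜) • p with hf'def
  set g' : Lp 𝕜 2 μ := ((nu:ℝ):𝕜) • q with hg'def
  have hnf' : ‖f'‖ ^ 2 = D ^ 2 / 2 := by
    rw [hf'def, norm_smul, RCLike.norm_ofReal, abs_of_pos hlam0, mul_pow, hlamdef, div_pow,
      mul_pow, hs2]
    field_simp
  have hng' : ‖g'‖ ^ 2 = D ^ 2 / 2 := by
    rw [hg'def, norm_smul, RCLike.norm_ofReal, abs_of_pos hnu0, mul_pow, hnudef, div_pow,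
      mul_pow, hs2]
    field_simp
  have hip : (inner 𝕜 f' g' : 𝕜) = 0 := by
    rw [hf'def, hg'def, inner_smul_left, inner_smul_right, hpq0, mul_zero, mul_zero]
  -- span membership
  have hfmem : f ∈ Submodule.span 𝕜 ({f, g} : Set (Lp 𝕜 2 μ)) :=
    Submodule.subset_span (by simp)
  have hgmem : g ∈ Submodule.span 𝕜 ({f, g} : Set (Lp 𝕜 2 μ)) :=
    Submodule.subset_span (by simp)
  have hvmem : v ∈ Submodule.span 𝕜 ({f, g} : Set (Lp 𝕜 2 μ)) := by
    rw [hvdef]; exact Submodule.smul_mem _ _ hgmem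
  have hpmem : p ∈ Submodule.span 𝕜 ({f, g} : Set (Lp 𝕜 2 μ)) := by
    rw [hpdef]
    exact add_mem (Submodule.smul_mem _ _ hfmem) (Submodule.smul_mem _ _ hvmem)
  have hqmem : q ∈ Submodule.span 𝕜 ({f, g} : Set (Lp 𝕜 2 μ)) := by
    rw [hqdef]
    exact add_mem (Submodule.smul_mem _ _ hfmem) (Submodule.smul_mem _ _ hvmem)
  have hf'mem : f' ∈ Submodule.span 𝕜 ({f, g} : Set (Lp 𝕜 2 μ)) := by
    rw [hf'def]; exact Submodule.smul_mem _ _ hpmem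
  have hg'mem : g' ∈ Submodule.span 𝕜 ({f, g} : Set (Lp 𝕜 2 μ)) := by
    rw [hg'def]; exact Submodule.smul_mem _ _ hqmem
  -- phase distance
  have hphase : phaseDist 𝕜 f g = phaseDist 𝕜 f' g' := by
    rw [phaseDist_eq, phaseDist_eq, hip, norm_zero]
    have hz0n : ‖(inner 𝕜 f g : 𝕜)‖ = c := by rw [← hz0, ← hcdef]
    rw [hz0n, hnf', hng', ← hAdef, ← hBdef]
    congr 1
    rw [hD2]; ring
  -- pointwise-norm elements of L²(ℝ)
  set Nm : Lp 𝕜 2 μ → Lp ℝ 2 μ := fun u => (lipschitzWith_one_norm.compLp norm_zero u)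
    with hNmdef
  have hNcoe : ∀ u : Lp 𝕜 2 μ, ⇑(Nm u) =ᵐ[μ] fun ω => ‖u ω‖ := fun u =>
    LipschitzWith.coeFn_compLp _ _ _
  have hNnorm : ∀ u : Lp 𝕜 2 μ, ‖Nm u‖ = ‖u‖ := fun u => by
    rw [Lp.norm_def, Lp.norm_def, eLpNorm_congr_ae (hNcoe u), eLpNorm_norm]
  have hNinner : ∀ u w : Lp 𝕜 2 μ,
      (inner ℝ (Nm u) (Nm w) : ℝ) = ∫ ω, ‖u ω‖ * ‖w ω‖ ∂μ := by
    intro u w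
    rw [L2.inner_def]
    apply integral_congr_ae
    filter_upwards [hNcoe u, hNcoe w] with ω h1 h2
    rw [RCLike.inner_apply', h1, h2, conj_trivial]
  have hIntMul : ∀ u w : Lp 𝕜 2 μ, Integrable (fun ω => ‖u ω‖ * ‖w ω‖) μ := by
    intro u w
    refine (L2.integrable_inner (𝕜 := ℝ) (Nm u) (Nm w)).congr ?_
    filter_upwards [hNcoe u, hNcoe w] with ω h1 h2
    rw [RCLike.inner_apply', h1, h2, conj_trivial]
  have hIntRe : Integrable (fun ω => RCLike.re (inner 𝕜 (f ω) (v ω) : 𝕜)) μ :=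
    (L2.integrable_inner f v).re
  have hIntSq : ∀ u : Lp 𝕜 2 μ, Integrable (fun ω => ‖u ω‖ ^ 2) μ := by
    intro u
    refine (L2.integrable_inner (𝕜 := 𝕜) u u).re.congr ?_
    exact Filter.Eventually.of_forall fun ω => inner_self_eq_norm_sq _
  -- basic integral identities
  have hAint : ∫ ω, ‖f ω‖ ^ 2 ∂μ = A := by
    calc ∫ ω, ‖f ω‖ ^ 2 ∂μ = ∫ ω, RCLike.re (inner 𝕜 (f ω) (f ω) : 𝕜) ∂μ :=
          integral_congr_ae (Filter.Eventually.of_forall fun ω =>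
            (inner_self_eq_norm_sq _).symm)
      _ = RCLike.re (inner 𝕜 f f : 𝕜) := by
          rw [integral_re (L2.integrable_inner f f), ← L2.inner_def]
      _ = A := by rw [inner_self_eq_norm_sq, ← hAdef]
  have hBint : ∫ ω, ‖v ω‖ ^ 2 ∂μ = B := by
    calc ∫ ω, ‖v ω‖ ^ 2 ∂μ = ∫ ω, RCLike.re (inner 𝕜 (v ω) (v ω) : 𝕜) ∂μ :=
          integral_congr_ae (Filter.Eventually.of_forall fun ω =>
            (inner_self_eq_norm_sq _).symm)
      _ = RCLike.re (inner 𝕜 v v : 𝕜) := by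
          rw [integral_re (L2.integrable_inner v v), ← L2.inner_def]
      _ = B := by rw [inner_self_eq_norm_sq, hvg_norm, ← hBdef]
  have hcint : ∫ ω, RCLike.re (inner 𝕜 (f ω) (v ω) : 𝕜) ∂μ = c := by
    rw [integral_re (L2.integrable_inner f v), ← L2.inner_def, hfv, RCLike.ofReal_re]
  set I : ℝ := ∫ ω, ‖f ω‖ * ‖v ω‖ ∂μ with hIdef
  have hIc : c ≤ I := by
    rw [← hcint, hIdef]
    exact integral_mono_ae hIntRe (hIntMul f v)
      (Filter.Eventually.of_forall fun ω => re_inner_le_norm _ _)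
  have hIg : ∫ ω, ‖f ω‖ * ‖g ω‖ ∂μ = I := by
    rw [hIdef]
    apply integral_congr_ae
    filter_upwards [Lp.coeFn_smul α g] with ω h1
    have h2 : ‖v ω‖ = ‖g ω‖ := by
      rw [hvdef, h1, Pi.smul_apply, norm_smul, hα, one_mul]
    rw [h2]
  -- pointwise identification of p and q
  have hpcoe : ⇑p =ᵐ[μ] fun ω => ((a:ℝ):𝕜) * f ω + ((b:ℝ):𝕜) * v ω := by
    rw [hpdef]
    filter_upwards [Lp.coeFn_add (((a:ℝ):𝕜) • f) (((b:ℝ):𝕜) • v),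
      Lp.coeFn_smul ((a:ℝ):𝕜) f, Lp.coeFn_smul ((b:ℝ):𝕜) v] with ω h1 h2 h3
    rw [h1, Pi.add_apply, h2, h3, Pi.smul_apply, Pi.smul_apply, smul_eq_mul, smul_eq_mul]
  have hqcoe : ⇑q =ᵐ[μ] fun ω => ((b:ℝ):𝕜) * f ω + ((a:ℝ):𝕜) * v ω := by
    rw [hqdef]
    filter_upwards [Lp.coeFn_add (((b:ℝ):𝕜) • f) (((a:ℝ):𝕜) • v),
      Lp.coeFn_smul ((b:ℝ):𝕜) f, Lp.coeFn_smul ((a:ℝ):𝕜) v] with ω h1 h2 h3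
    rw [h1, Pi.add_apply, h2, h3, Pi.smul_apply, Pi.smul_apply, smul_eq_mul, smul_eq_mul]
  have hae : ∀ᵐ ω ∂μ, (1 + 2 * ε) * (‖f ω‖ * ‖v ω‖ - RCLike.re (inner 𝕜 (f ω) (v ω) : 𝕜))
      + (RCLike.re (inner 𝕜 (f ω) (v ω) : 𝕜) - ε * (‖f ω‖ ^ 2 + ‖v ω‖ ^ 2))
      ≤ ‖p ω‖ * ‖q ω‖ := by
    filter_upwards [hpcoe, hqcoe] with ω h1 h2
    rw [h1, h2, RCLike.inner_apply']
    exact key_pointwise (f ω) (v ω) a b ε hone hab hε0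
  have hKint : Integrable (fun ω =>
      (1 + 2 * ε) * (‖f ω‖ * ‖v ω‖ - RCLike.re (inner 𝕜 (f ω) (v ω) : 𝕜))
      + (RCLike.re (inner 𝕜 (f ω) (v ω) : 𝕜) - ε * (‖f ω‖ ^ 2 + ‖v ω‖ ^ 2))) μ :=
    (((hIntMul f v).sub hIntRe).const_mul (1 + 2 * ε)).add
      (hIntRe.sub (((hIntSq f).add (hIntSq v)).const_mul ε))
  have hKey : (1 + 2 * ε) * (I - c) ≤ ∫ ω, ‖p ω‖ * ‖q ω‖ ∂μ := by
    have h1 := integral_mono_ae hKint (hIntMul p q) hae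
    have h2 : ∫ ω, ((1 + 2 * ε) * (‖f ω‖ * ‖v ω‖ - RCLike.re (inner 𝕜 (f ω) (v ω) : 𝕜))
        + (RCLike.re (inner 𝕜 (f ω) (v ω) : 𝕜) - ε * (‖f ω‖ ^ 2 + ‖v ω‖ ^ 2))) ∂μ
        = (1 + 2 * ε) * (I - c) + (c - ε * (A + B)) := by
      have i1 : Integrable (fun ω =>
          (1 + 2 * ε) * (‖f ω‖ * ‖v ω‖ - RCLike.re (inner 𝕜 (f ω) (v ω) : 𝕜))) μ :=
        ((hIntMul f v).sub hIntRe).const_mul _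
      have i2 : Integrable (fun ω =>
          RCLike.re (inner 𝕜 (f ω) (v ω) : 𝕜) - ε * (‖f ω‖ ^ 2 + ‖v ω‖ ^ 2)) μ :=
        hIntRe.sub (((hIntSq f).add (hIntSq v)).const_mul ε)
      have i4 : Integrable (fun ω => ε * (‖f ω‖ ^ 2 + ‖v ω‖ ^ 2)) μ :=
        ((hIntSq f).add (hIntSq v)).const_mul ε
      rw [integral_add i1 i2, integral_const_mul, integral_sub (hIntMul f v) hIntRe,
        integral_sub hIntRe i4, integral_const_mul, integral_add (hIntSq f) (hIntSq v),
        hAint, hBint, hcint, ← hIdef]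
    rw [h2] at h1
    have h3 : c - ε * (A + B) = 0 := by rw [hεS]; ring
    linarith
  -- inner products of the norm elements
  have hNf'g' : (inner ℝ (Nm f') (Nm g') : ℝ) = (lam * nu) * ∫ ω, ‖p ω‖ * ‖q ω‖ ∂μ := by
    rw [hNinner f' g', ← integral_const_mul]
    apply integral_congr_ae
    filter_upwards [Lp.coeFn_smul ((lam:ℝ):𝕜) p, Lp.coeFn_smul ((nu:ℝ):𝕜) q] with ω h1 h2
    have e1 : ‖f' ω‖ = lam * ‖p ω‖ := by
      rw [hf'def, h1, Pi.smul_apply, norm_smul, RCLike.norm_ofReal, abs_of_pos hlam0]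
    have e2 : ‖g' ω‖ = nu * ‖q ω‖ := by
      rw [hg'def, h2, Pi.smul_apply, norm_smul, RCLike.norm_ofReal, abs_of_pos hnu0]
    rw [e1, e2]; ring
  have hNfg : (inner ℝ (Nm f) (Nm g) : ℝ) = I := by rw [hNinner f g, hIg]
  -- the scaling factor bound
  have hden : Real.sqrt 2 * ‖p‖ * (Real.sqrt 2 * ‖q‖) = 2 * (‖p‖ * ‖q‖) := by
    linear_combination ‖p‖ * ‖q‖ * hs2
  have hln : lam * nu = D ^ 2 / (2 * (‖p‖ * ‖q‖)) := by
    rw [hlamdef, hnudef, div_mul_div_comm, hden, sq]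
  have hsumpq : ‖p‖ ^ 2 + ‖q‖ ^ 2 = (A + B) - 4 * ε * c := by
    rw [hnp2, hnq2]
    linear_combination (A + B) * hone + 4 * c * hab
  have hD2e : D ^ 2 * (1 + 2 * ε) = (A + B) - 4 * ε * c := by
    rw [hD2]; linear_combination 2 * hεS
  have hAM : 2 * (‖p‖ * ‖q‖) ≤ D ^ 2 * (1 + 2 * ε) := by
    rw [hD2e, ← hsumpq]
    have h5 := two_mul_le_add_sq ‖p‖ ‖q‖
    linarith
  have hone_le : 1 ≤ lam * nu * (1 + 2 * ε) := by
    rw [hln, div_mul_eq_mul_div, le_div_iff₀ (mul_pos two_pos (mul_pos hnp0 hnq0))]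
    linarith
  have hIcc : 0 ≤ I - c := by linarith
  have hstep : I - c ≤ lam * nu * ∫ ω, ‖p ω‖ * ‖q ω‖ ∂μ := by
    have h2 : lam * nu * ((1 + 2 * ε) * (I - c)) ≤ lam * nu * ∫ ω, ‖p ω‖ * ‖q ω‖ ∂μ :=
      mul_le_mul_of_nonneg_left hKey (mul_pos hlam0 hnu0).le
    have h3 : (I - c) * 1 ≤ (I - c) * (lam * nu * (1 + 2 * ε)) :=
      mul_le_mul_of_nonneg_left hone_le hIcc
    have h4 : (I - c) * (lam * nu * (1 + 2 * ε)) = lam * nu * ((1 + 2 * ε) * (I - c)) := by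
      ring
    linarith
  -- the norm comparison in L²(ℝ)
  have hnormle : ‖Nm f' - Nm g'‖ ≤ ‖Nm f - Nm g‖ := by
    have e1 : ‖Nm f' - Nm g'‖ ^ 2
        = ‖f'‖ ^ 2 - 2 * (inner ℝ (Nm f') (Nm g') : ℝ) + ‖g'‖ ^ 2 := by
      rw [norm_sub_sq_real, hNnorm, hNnorm]
    have e2 : ‖Nm f - Nm g‖ ^ 2 = A - 2 * I + B := by
      rw [norm_sub_sq_real, hNnorm, hNnorm, hNfg, ← hAdef, ← hBdef]
    have e3 : ‖Nm f' - Nm g'‖ ^ 2 ≤ ‖Nm f - Nm g‖ ^ 2 := by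
      rw [e1, e2, hnf', hng', hNf'g']
      have hD2' := hD2
      linarith [hstep]
    calc ‖Nm f' - Nm g'‖ = Real.sqrt (‖Nm f' - Nm g'‖ ^ 2) :=
          (Real.sqrt_sq (norm_nonneg _)).symm
      _ ≤ Real.sqrt (‖Nm f - Nm g‖ ^ 2) := Real.sqrt_le_sqrt e3
      _ = ‖Nm f - Nm g‖ := Real.sqrt_sq (norm_nonneg _)
  -- convert the eLpNorm goal
  have econv : ∀ u w : Lp 𝕜 2 μ,
      eLpNorm (fun ω => ‖u ω‖ - ‖w ω‖) 2 μ = ENNReal.ofReal ‖Nm u - Nm w‖ := by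
    intro u w
    have h1 : (fun ω => ‖u ω‖ - ‖w ω‖) =ᵐ[μ] ⇑(Nm u - Nm w) := by
      filter_upwards [Lp.coeFn_sub (Nm u) (Nm w), hNcoe u, hNcoe w] with ω h1 h2 h3
      rw [h1, Pi.sub_apply, h2, h3]
    rw [eLpNorm_congr_ae h1, Lp.norm_def, ENNReal.ofReal_toReal (Lp.eLpNorm_ne_top _)]
  refine ⟨f', g', hf'mem, hg'mem, hip, hphase, ?_⟩
  rw [econv f' g', econv f g]
  exact ENNReal.ofReal_le_ofReal hnormle
end

section
/- Let $(e_n)$ be an orthonormal basis of a Hilbert space $\mathcal{H}$, let $G(m) = 2^m C$ for a constant $C \geq 1$, $\gamma > 1$, $R > 0$, and let $\mathcal{B}_\gamma(R) = \{f : \|f - P_m f\| \leq 2^{-(m+1)\gamma}C^{-\gamma}R\|f\| \text{ for all } m\}$ where $P_m$ projects onto $\mathrm{span}\{e_1,\dots,e_m\}$. Then for every sufficiently large $m$, the vectors $x = e_1 + \frac{R}{2^{m\gamma}C^\gamma} e_m$ and $y = e_1 - \frac{R}{2^{m\gamma}C^\gamma} e_m$ belong to $\mathcal{B}_\gamma(R)$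 and satisfy $\inf_{|\alpha|=1}\|x - \alpha y\| = \|x-y\| = \frac{2R}{2^{m\gamma}C^\gamma}$. -/
open Metric

private lemma ortho_norm_sq {𝕜 H : Type*} [RCLike 𝕜] [NormedAddCommGroup H]
    [InnerProductSpace 𝕜 H] {u v : H} (hu : ‖u‖ = 1) (hv : ‖v‖ = 1)
    (huv : (inner 𝕜 u v : 𝕜) = 0) (a b : 𝕜) :
    ‖a • u + b • v‖ ^ 2 = ‖a‖ ^ 2 + ‖b‖ ^ 2 := by
  have h : (inner 𝕜 (a • u) (b • v) : 𝕜) = 0 := by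
    rw [inner_smul_left, inner_smul_right, huv, mul_zero, mul_zero]
  rw [@norm_add_sq 𝕜, h, map_zero]
  simp [norm_smul, hu, hv]

/-- With `G m = 2^m C` and the corresponding set `𝓑_γ(R)`, for all
sufficiently large `m` the vectors `x = e 1 + (R/(2^{mγ}C^γ)) e m` and
`y = e 1 - (R/(2^{mγ}C^γ)) e m` lie in `𝓑_γ(R)` and satisfy
`inf_{|α|=1} ‖x - α y‖ = ‖x - y‖ = 2R/(2^{mγ}C^γ)`. -/
theorem stmt6 {𝕜 H : Type*} [RCLike 𝕜] [NormedAddCommGroup H] [InnerProductSpace 𝕜 H]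
    [CompleteSpace H] (e : ℕ → H)
    (he : Orthonormal 𝕜 (fun i : {n : ℕ // 1 ≤ n} => e i))
    (C γ R : ℝ) (hC : 1 ≤ C) (hγ : 1 < γ) (hR : 0 < R) :
    ∃ M : ℕ, ∀ m : ℕ, M ≤ m →
      (∀ m' : ℕ, 1 ≤ m' →
        infDist (e 1 + ((R / ((2 : ℝ) ^ ((m : ℝ) * γ) * C ^ γ) : ℝ) : 𝕜) • e m)
            (Submodule.span 𝕜 (e '' {i | 1 ≤ i ∧ i ≤ m'}) : Set H) ≤
          (2 : ℝ) ^ (-(((m' : ℝ) + 1) * γ)) * C ^ (-γ) * R *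
            ‖e 1 + ((R / ((2 : ℝ) ^ ((m : ℝ) * γ) * C ^ γ) : ℝ) : 𝕜) • e m‖) ∧
      (∀ m' : ℕ, 1 ≤ m' →
        infDist (e 1 - ((R / ((2 : ℝ) ^ ((m : ℝ) * γ) * C ^ γ) : ℝ) : 𝕜) • e m)
            (Submodule.span 𝕜 (e '' {i | 1 ≤ i ∧ i ≤ m'}) : Set H) ≤
          (2 : ℝ) ^ (-(((m' : ℝ) + 1) * γ)) * C ^ (-γ) * R *
            ‖e 1 - ((R / ((2 : ℝ) ^ ((m : ℝ) * γ) * C ^ γ) : ℝ) : 𝕜) • e m‖) ∧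
      phaseDist 𝕜 (e 1 + ((R / ((2 : ℝ) ^ ((m : ℝ) * γ) * C ^ γ) : ℝ) : 𝕜) • e m)
          (e 1 - ((R / ((2 : ℝ) ^ ((m : ℝ) * γ) * C ^ γ) : ℝ) : 𝕜) • e m) =
        ‖(e 1 + ((R / ((2 : ℝ) ^ ((m : ℝ) * γ) * C ^ γ) : ℝ) : 𝕜) • e m) -
          (e 1 - ((R / ((2 : ℝ) ^ ((m : ℝ) * γ) * C ^ γ) : ℝ) : 𝕜) • e m)‖ ∧
      ‖(e 1 + ((R / ((2 : ℝ) ^ ((m : ℝ) * γ) * C ^ γ) : ℝ) : 𝕜) • e m) -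
          (e 1 - ((R / ((2 : ℝ) ^ ((m : ℝ) * γ) * C ^ γ) : ℝ) : 𝕜) • e m)‖ =
        2 * R / ((2 : ℝ) ^ ((m : ℝ) * γ) * C ^ γ) := by
  obtain ⟨N, hN⟩ := pow_unbounded_of_one_lt R (one_lt_two (α := ℝ))
  refine ⟨max 2 N, fun m hm => ?_⟩
  have hm2 : 2 ≤ m := le_trans (le_max_left _ _) hm
  have hmN : N ≤ m := le_trans (le_max_right _ _) hm
  have hm1 : 1 ≤ m := by omega
  have hγ0 : (0:ℝ) < γ := lt_trans one_pos hγ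
  have hC0 : (0:ℝ) < C := lt_of_lt_of_le one_pos hC
  set t : ℝ := R / ((2 : ℝ) ^ ((m : ℝ) * γ) * C ^ γ) with ht
  have hpow_pos : (0:ℝ) < (2 : ℝ) ^ ((m : ℝ) * γ) * C ^ γ := by positivity
  have ht_pos : 0 < t := div_pos hR hpow_pos
  have hCγ : (1:ℝ) ≤ C ^ γ := by
    calc (1:ℝ) = 1 ^ γ := (Real.one_rpow γ).symm
    _ ≤ C ^ γ := Real.rpow_le_rpow zero_le_one hC hγ0.le
  have h2m : R ≤ (2:ℝ) ^ ((m:ℝ) * γ) := by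
    calc R ≤ 2 ^ N := hN.le
    _ = (2:ℝ) ^ (N:ℝ) := by rw [Real.rpow_natCast]
    _ ≤ (2:ℝ) ^ ((m:ℝ)*γ) := by
        apply Real.rpow_le_rpow_of_exponent_le one_le_two
        have h1 : (N:ℝ) ≤ (m:ℝ) := by exact_mod_cast hmN
        nlinarith [Nat.cast_nonneg (α := ℝ) m]
  have ht1 : t ≤ 1 := by
    rw [ht, div_le_one hpow_pos]
    calc R ≤ 2 ^ ((m:ℝ)*γ) := h2m
    _ ≤ _ := le_mul_of_one_le_right (by positivity) hCγ
  -- orthonormal facts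
  have he1 : ‖e 1‖ = 1 := he.1 ⟨1, le_refl 1⟩
  have hem : ‖e m‖ = 1 := he.1 ⟨m, hm1⟩
  have hinner : (inner 𝕜 (e 1) (e m) : 𝕜) = 0 := by
    have hne : (⟨1, le_refl 1⟩ : {n : ℕ // 1 ≤ n}) ≠ ⟨m, hm1⟩ := by
      simp only [ne_eq, Subtype.mk.injEq]; omega
    exact he.2 hne
  set tk : 𝕜 := ((t : ℝ) : 𝕜) with htk
  have hk : ‖tk‖ = t := by
    rw [htk, RCLike.norm_ofReal, abs_of_pos ht_pos]
  clear_value tk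
  clear_value t
  have hnormsq : ∀ c : 𝕜, ‖e 1 + c • e m‖ ^ 2 = 1 + ‖c‖ ^ 2 := by
    intro c
    have h := ortho_norm_sq he1 hem hinner (1 : 𝕜) c
    simpa using h
  -- infDist claim
  have hinfDist : ∀ c : 𝕜, ‖c‖ = t → ∀ m' : ℕ, 1 ≤ m' →
      infDist (e 1 + c • e m) (Submodule.span 𝕜 (e '' {i | 1 ≤ i ∧ i ≤ m'}) : Set H) ≤
        (2:ℝ)^(-(((m':ℝ)+1)*γ)) * C^(-γ) * R * ‖e 1 + c • e m‖ := by
    intro c hc m' hm'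
    have hx1 : (1:ℝ) ≤ ‖e 1 + c • e m‖ := by
      nlinarith [norm_nonneg (e 1 + c • e m), hnormsq c, sq_nonneg ‖c‖]
    by_cases hmm : m ≤ m'
    · have hxmem : e 1 + c • e m ∈ (Submodule.span 𝕜 (e '' {i | 1 ≤ i ∧ i ≤ m'}) : Set H) := by
        apply Submodule.add_mem
        · exact Submodule.subset_span ⟨1, ⟨le_refl 1, hm'⟩, rfl⟩
        · exact Submodule.smul_mem _ _ (Submodule.subset_span ⟨m, ⟨hm1, hmm⟩, rfl⟩)
      rw [infDist_zero_of_mem hxmem]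
      positivity
    · push_neg at hmm
      have hle : infDist (e 1 + c • e m)
          (Submodule.span 𝕜 (e '' {i | 1 ≤ i ∧ i ≤ m'}) : Set H) ≤ t := by
        have he1mem : e 1 ∈ (Submodule.span 𝕜 (e '' {i | 1 ≤ i ∧ i ≤ m'}) : Set H) :=
          Submodule.subset_span ⟨1, ⟨le_refl 1, hm'⟩, rfl⟩
        calc infDist (e 1 + c • e m) _ ≤ dist (e 1 + c • e m) (e 1) :=
              infDist_le_dist_of_mem he1mem
        _ = ‖c • e m‖ := by rw [dist_eq_norm]; congr 1; abel
        _ = t := by rw [norm_smul, hem, hc, mul_one]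
      have key : t ≤ (2:ℝ)^(-(((m':ℝ)+1)*γ)) * C^(-γ) * R := by
        have hA : (2:ℝ)^(-((m:ℝ)*γ)) ≤ (2:ℝ)^(-(((m':ℝ)+1)*γ)) := by
          apply Real.rpow_le_rpow_of_exponent_le one_le_two
          have h1 : (m':ℝ) + 1 ≤ (m:ℝ) := by exact_mod_cast hmm
          nlinarith
        have ht' : t = (2:ℝ)^(-((m:ℝ)*γ)) * C^(-γ) * R := by
          rw [ht, Real.rpow_neg (by norm_num), Real.rpow_neg hC0.le]
          field_simp
        rw [ht']
        gcongr
      refine hle.trans (key.trans ?_)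
      exact le_mul_of_one_le_right (by positivity) hx1
  -- norm of x - y
  have hxy_eq : (e 1 + tk • e m) - (e 1 - tk • e m) = ((2:𝕜) * tk) • e m := by
    module
  have hxy_norm : ‖(e 1 + tk • e m) - (e 1 - tk • e m)‖ = 2 * t := by
    rw [hxy_eq, norm_smul, hem, mul_one, norm_mul, hk]
    norm_num
  refine ⟨hinfDist tk hk, ?_, ?_, ?_⟩
  · intro m' hm'
    have h := hinfDist (-tk) (by rw [norm_neg, hk]) m' hm'
    simpa [sub_eq_add_neg] using h
  · -- phaseDist
    have hbdd : BddBelow (Set.range fun α : {a : 𝕜 // ‖a‖ = 1} =>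
        ‖(e 1 + tk • e m) - (α : 𝕜) • (e 1 - tk • e m)‖) := by
      refine ⟨0, ?_⟩
      rintro r ⟨α, rfl⟩
      exact norm_nonneg _
    have hlow : ∀ α : {a : 𝕜 // ‖a‖ = 1},
        ‖(e 1 + tk • e m) - (e 1 - tk • e m)‖ ≤
          ‖(e 1 + tk • e m) - (α : 𝕜) • (e 1 - tk • e m)‖ := by
      rintro ⟨α, hα⟩
      simp only
      have hrepr : (e 1 + tk • e m) - α • (e 1 - tk • e m) =
          ((1:𝕜) - α) • e 1 + (tk * (1 + α)) • e m := by
        module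
      have hsq : ‖(e 1 + tk • e m) - α • (e 1 - tk • e m)‖^2 =
          ‖(1:𝕜) - α‖^2 + t^2 * ‖(1:𝕜)+α‖^2 := by
        rw [hrepr, ortho_norm_sq he1 hem hinner, norm_mul, hk]
        ring
      have h1 : ‖(1:𝕜) - α‖^2 = 2 - 2*RCLike.re α := by
        rw [@norm_sub_sq 𝕜]; simp [RCLike.inner_apply, hα]; ring
      have h2 : ‖(1:𝕜) + α‖^2 = 2 + 2*RCLike.re α := by
        rw [@norm_add_sq 𝕜]; simp [RCLike.inner_apply, hα]; ring
      have hre : RCLike.re α ≤ 1 := hα ▸ RCLike.re_le_norm α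
      rw [hxy_norm]
      have hsq2 : (2*t)^2 ≤ ‖(e 1 + tk • e m) - α • (e 1 - tk • e m)‖^2 := by
        rw [hsq, h1, h2]
        have h3 : 0 ≤ (1 - RCLike.re α) * (1 - t^2) :=
          mul_nonneg (by linarith) (by nlinarith)
        nlinarith
      exact (pow_le_pow_iff_left₀ (by positivity)
        (norm_nonneg ((e 1 + tk • e m) - α • (e 1 - tk • e m))) two_ne_zero).mp hsq2
    haveI : Nonempty {a : 𝕜 // ‖a‖ = 1} := ⟨⟨1, norm_one⟩⟩
    rw [phaseDist]
    refine le_antisymm ?_ (le_ciInf hlow)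
    have h := ciInf_le hbdd (⟨1, norm_one⟩ : {a : 𝕜 // ‖a‖ = 1})
    simpa using h
  · rw [hxy_norm, ht]
    ring
end

section
/- Let $(e_n)_{n\geq 1}$ be an orthonormal basis of an infinite-dimensional real Hilbert space $\mathcal{H}$, fix $0 < \varepsilon < 1/8$, a sequence $\alpha_n \searrow 0$ with $\sum_{n\geq 2}\alpha_n < \varepsilon/2$, and $\beta_n \searrow 0$ with $\beta_n < \alpha_n/2$. Let $P_m$ be the projection onto $\mathrm{span}\{e_1,\dots,e_m\}$, let $\mathcal{B} = \{f : \|f - P_m f\| \leq \beta_{m+1}\|f\| \text{ for all } m\}$, and let $\varphi_1 = e_1$, $\varphi_n = \alpha_n e_1 + e_n$ for $n \geq 2$. Then for all $f, g \in \mathcal{B}$: $\inf_{\alpha = \pm 1}\|f - \alpha g\| \leq (1-\varepsilon)^{-1/2}\Big(\sum_{n\geq 1}\big||\langle f,\varphi_n\rangle| - |\langle g,\varphi_n\rangle|\big|^2\Big)^{1/2}$. -/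
open Metric

private lemma stmt8_parseval {H : Type*} [NormedAddCommGroup H] [InnerProductSpace ℝ H]
    [CompleteSpace H] (e : ℕ → H) (he : Orthonormal ℝ (fun i : {n : ℕ // 1 ≤ n} => e i))
    (htotal : (Submodule.span ℝ (e '' {n | 1 ≤ n})).topologicalClosure = ⊤) (h : H) :
    HasSum (fun n : ℕ => (inner ℝ (e (n + 1)) h : ℝ) ^ 2) (‖h‖ ^ 2) := by
  have hrange : Set.range (fun i : {n : ℕ // 1 ≤ n} => e i) = e '' {n | 1 ≤ n} := by
    rw [show (fun i : {n : ℕ // 1 ≤ n} => e i) = e ∘ Subtype.val from rfl, Set.range_comp,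
      Subtype.range_coe_subtype]
  have hsp : ⊤ ≤ (Submodule.span ℝ
      (Set.range (fun i : {n : ℕ // 1 ≤ n} => e i))).topologicalClosure := by
    rw [hrange, htotal]
  let b : HilbertBasis {n : ℕ // 1 ≤ n} ℝ H := HilbertBasis.mk he hsp
  have hb : ∀ i : {n : ℕ // 1 ≤ n}, b i = e i := fun i =>
    congrFun (HilbertBasis.coe_mk he hsp) i
  have H1 : HasSum (fun i : {n : ℕ // 1 ≤ n} => (inner ℝ h (b i) : ℝ) * inner ℝ (b i) h)
      ((inner ℝ h h : ℝ)) := b.hasSum_inner_mul_inner h h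
  have H2 : HasSum (fun i : {n : ℕ // 1 ≤ n} => (inner ℝ (e i) h : ℝ) ^ 2) (‖h‖ ^ 2) := by
    convert H1 using 1
    · funext i
      rw [hb i, real_inner_comm]
      ring
    · rw [real_inner_self_eq_norm_sq]
  let eqv : ℕ ≃ {n : ℕ // 1 ≤ n} :=
    { toFun := fun n => ⟨n + 1, Nat.le_add_left 1 n⟩
      invFun := fun i => i.1 - 1
      left_inv := fun n => by simp
      right_inv := fun i => Subtype.ext (Nat.succ_pred_eq_of_pos i.2) }
  exact (eqv.hasSum_iff).2 H2

private lemma stmt8_frame {H : Type*} [NormedAddCommGroup H] [InnerProductSpace ℝ H]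
    [CompleteSpace H] (e : ℕ → H) (he : Orthonormal ℝ (fun i : {n : ℕ // 1 ≤ n} => e i))
    (htotal : (Submodule.span ℝ (e '' {n | 1 ≤ n})).topologicalClosure = ⊤)
    (ε : ℝ) (α : ℕ → ℝ) (hα0 : ∀ n, 0 ≤ α n) (hαanti : Antitone α)
    (hαsum : Summable fun n => α (n + 2)) (hαε : ∑' n, α (n + 2) < ε / 2)
    (φ : ℕ → H) (hφ1 : φ 1 = e 1) (hφ : ∀ n, 2 ≤ n → φ n = α n • e 1 + e n)
    (h : H) (hP : HasSum (fun n : ℕ => (inner ℝ (e (n + 1)) h : ℝ) ^ 2) (‖h‖ ^ 2)) :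
    (1 - ε) * ‖h‖ ^ 2 ≤ ∑' n : ℕ, (inner ℝ (φ (n + 1)) h : ℝ) ^ 2 := by
  set c : ℕ → ℝ := fun n => (inner ℝ (e n) h : ℝ) with hc_def
  have hnorm1 : ∀ k : ℕ, 1 ≤ k → ‖e k‖ = 1 := fun k hk => he.1 ⟨k, hk⟩
  have hc : ∀ k : ℕ, 1 ≤ k → |c k| ≤ ‖h‖ := by
    intro k hk
    have := norm_inner_le_norm (𝕜 := ℝ) (e k) h
    rwa [hnorm1 k hk, one_mul, Real.norm_eq_abs] at this
  have hφval : ∀ n : ℕ, (inner ℝ (φ (n + 2)) h : ℝ) = α (n + 2) * c 1 + c (n + 2) := by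
    intro n
    rw [hφ (n + 2) (by omega), inner_add_left, real_inner_smul_left]
  -- summability facts
  have hcsum : Summable fun n : ℕ => c (n + 1) ^ 2 := hP.summable
  have hcsum2 : Summable fun n : ℕ => c (n + 2) ^ 2 := by
    have := (summable_nat_add_iff (f := fun n : ℕ => c (n + 1) ^ 2) 1).2 hcsum
    exact this
  have hαsq : Summable fun n : ℕ => α (n + 2) ^ 2 := by
    apply Summable.of_nonneg_of_le (fun n => sq_nonneg _) (fun n => ?_) (hαsum.mul_left (α 2))
    have h1 : α (n + 2) ≤ α 2 := hαanti (by omega)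
    have h2 : 0 ≤ α (n + 2) := hα0 _
    nlinarith
  have hGsum : Summable fun n : ℕ => (α (n + 2) * c 1 + c (n + 2)) ^ 2 := by
    apply Summable.of_nonneg_of_le (fun n => sq_nonneg _) (fun n => ?_)
      (((hαsq.mul_right (c 1 ^ 2)).add hcsum2).mul_left 2)
    nlinarith [sq_nonneg (α (n + 2) * c 1 - c (n + 2))]
  have hFsum : Summable fun n : ℕ => (inner ℝ (φ (n + 1)) h : ℝ) ^ 2 := by
    apply (summable_nat_add_iff (f := fun n : ℕ => (inner ℝ (φ (n + 1)) h : ℝ) ^ 2) 1).1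
    apply hGsum.congr
    intro n
    rw [hφval n]
  have hLsum : Summable fun n : ℕ => c (n + 2) ^ 2 - 2 * ‖h‖ ^ 2 * α (n + 2) :=
    hcsum2.sub (hαsum.mul_left _)
  -- pointwise bound
  have hpt : ∀ n : ℕ, c (n + 2) ^ 2 - 2 * ‖h‖ ^ 2 * α (n + 2)
      ≤ (α (n + 2) * c 1 + c (n + 2)) ^ 2 := by
    intro n
    have h1 : |c 1| ≤ ‖h‖ := hc 1 le_rfl
    have h2 : |c (n + 2)| ≤ ‖h‖ := hc (n + 2) (by omega)
    have habs : |c 1 * c (n + 2)| ≤ ‖h‖ * ‖h‖ := by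
      rw [abs_mul]
      exact mul_le_mul h1 h2 (abs_nonneg _) (norm_nonneg _)
    have hna := neg_abs_le (c 1 * c (n + 2))
    have hα := hα0 (n + 2)
    nlinarith [sq_nonneg (α (n + 2) * c 1), mul_le_mul_of_nonneg_left habs hα,
      mul_le_mul_of_nonneg_left hna hα]
  -- chain of tsum (in)equalities
  have e1 : ∑' n : ℕ, (inner ℝ (φ (n + 1)) h : ℝ) ^ 2
      = (inner ℝ (φ 1) h : ℝ) ^ 2 + ∑' n : ℕ, (inner ℝ (φ (n + 2)) h : ℝ) ^ 2 :=
    Summable.tsum_eq_zero_add hFsum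
  have e2 : ∑' n : ℕ, (inner ℝ (φ (n + 2)) h : ℝ) ^ 2
      = ∑' n : ℕ, (α (n + 2) * c 1 + c (n + 2)) ^ 2 := tsum_congr fun n => by rw [hφval n]
  have e3 : ∑' n : ℕ, (c (n + 2) ^ 2 - 2 * ‖h‖ ^ 2 * α (n + 2))
      ≤ ∑' n : ℕ, (α (n + 2) * c 1 + c (n + 2)) ^ 2 := Summable.tsum_le_tsum hpt hLsum hGsum
  have e4 : ∑' n : ℕ, (c (n + 2) ^ 2 - 2 * ‖h‖ ^ 2 * α (n + 2))
      = (∑' n : ℕ, c (n + 2) ^ 2) - 2 * ‖h‖ ^ 2 * ∑' n : ℕ, α (n + 2) := by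
    rw [Summable.tsum_sub hcsum2 (hαsum.mul_left _), tsum_mul_left]
  have e5 : ‖h‖ ^ 2 = c 1 ^ 2 + ∑' n : ℕ, c (n + 2) ^ 2 := by
    rw [← hP.tsum_eq]
    exact Summable.tsum_eq_zero_add hcsum
  have e6 : 2 * ‖h‖ ^ 2 * ∑' n : ℕ, α (n + 2) ≤ 2 * ‖h‖ ^ 2 * (ε / 2) := by
    apply mul_le_mul_of_nonneg_left hαε.le (by positivity)
  have hφ1' : (inner ℝ (φ 1) h : ℝ) ^ 2 = c 1 ^ 2 := by rw [hφ1]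
  nlinarith [e1, e2, e3, e4, e5, e6]

private lemma stmt8_key {H : Type*} [NormedAddCommGroup H] [InnerProductSpace ℝ H]
    [CompleteSpace H] (e : ℕ → H) (he : Orthonormal ℝ (fun i : {n : ℕ // 1 ≤ n} => e i))
    (htotal : (Submodule.span ℝ (e '' {n | 1 ≤ n})).topologicalClosure = ⊤)
    (ε : ℝ) (hε0 : 0 < ε) (hε : ε < 8⁻¹)
    (α : ℕ → ℝ) (hα0 : ∀ n, 0 ≤ α n) (hαanti : Antitone α)
    (hαsum : Summable fun n => α (n + 2)) (hαε : ∑' n, α (n + 2) < ε / 2)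
    (β : ℕ → ℝ)
    (hβα : ∀ n, 1 ≤ n → β n < 2⁻¹ * α n)
    (φ : ℕ → H) (hφ1 : φ 1 = e 1) (hφ : ∀ n, 2 ≤ n → φ n = α n • e 1 + e n)
    (f g : H)
    (hfC1 : ∀ n, 2 ≤ n → |(inner ℝ (e n) f : ℝ)| ≤ β n * ‖f‖)
    (hgC1 : ∀ n, 2 ≤ n → |(inner ℝ (e n) g : ℝ)| ≤ β n * ‖g‖)
    (hfC2 : ‖f‖ ≤ 2 * (inner ℝ (e 1) f : ℝ))
    (hgC2 : ‖g‖ ≤ 2 * (inner ℝ (e 1) g : ℝ)) :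
    min ‖f - g‖ ‖f + g‖ ≤ (1 - ε) ^ (-(1 / 2 : ℝ)) *
      Real.sqrt (∑' n, (|(inner ℝ (φ (n + 1)) f : ℝ)| - |(inner ℝ (φ (n + 1)) g : ℝ)|) ^ 2) := by
  have h1ε : (0:ℝ) < 1 - ε := by
    rw [show (8:ℝ)⁻¹ = 1/8 by norm_num] at hε
    linarith
  -- sign alignment
  have sign : ∀ x : H, (∀ n, 2 ≤ n → |(inner ℝ (e n) x : ℝ)| ≤ β n * ‖x‖) →
      ‖x‖ ≤ 2 * (inner ℝ (e 1) x : ℝ) → ∀ k, 1 ≤ k → 0 ≤ (inner ℝ (φ k) x : ℝ) := by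
    intro x hC1 hC2 k hk
    rcases eq_or_lt_of_le hk with hk1 | hk2
    · rw [← hk1, hφ1]
      linarith [norm_nonneg x]
    · rw [hφ k hk2, inner_add_left, real_inner_smul_left]
      have h1 := hC1 k hk2
      have h2 := hβα k hk
      have h3 := hα0 k
      have h4 := neg_abs_le (inner ℝ (e k) x : ℝ)
      have h5 : α k * ‖x‖ ≤ α k * (2 * (inner ℝ (e 1) x : ℝ)) :=
        mul_le_mul_of_nonneg_left hC2 h3
      have h6 : β k * ‖x‖ ≤ 2⁻¹ * α k * ‖x‖ :=
        mul_le_mul_of_nonneg_right h2.le (norm_nonneg x)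
      nlinarith
  have signf := sign f hfC1 hfC2
  have signg := sign g hgC1 hgC2
  -- rewrite the sum
  have hsum_eq : ∀ n : ℕ, (|(inner ℝ (φ (n + 1)) f : ℝ)| - |(inner ℝ (φ (n + 1)) g : ℝ)|) ^ 2
      = (inner ℝ (φ (n + 1)) (f - g) : ℝ) ^ 2 := by
    intro n
    rw [abs_of_nonneg (signf (n + 1) (by omega)), abs_of_nonneg (signg (n + 1) (by omega)),
      inner_sub_right]
  rw [tsum_congr hsum_eq]
  -- frame bound
  have FB := stmt8_frame e he htotal ε α hα0 hαanti hαsum hαε φ hφ1 hφ (f - g)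
    (stmt8_parseval e he htotal (f - g))
  set S : ℝ := ∑' n : ℕ, (inner ℝ (φ (n + 1)) (f - g) : ℝ) ^ 2 with hS
  have hS0 : 0 ≤ S := tsum_nonneg fun n => sq_nonneg _
  refine le_trans (min_le_left _ _) ?_
  rw [Real.rpow_neg h1ε.le, ← Real.sqrt_eq_rpow]
  rw [← Real.sqrt_sq (norm_nonneg (f - g))]
  have hdiv : ‖f - g‖ ^ 2 ≤ S / (1 - ε) := by
    rw [le_div_iff₀ h1ε]
    linarith [FB]
  calc Real.sqrt (‖f - g‖ ^ 2) ≤ Real.sqrt (S / (1 - ε)) := Real.sqrt_le_sqrt hdiv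
    _ = (Real.sqrt (1 - ε))⁻¹ * Real.sqrt S := by
        rw [Real.sqrt_div hS0, div_eq_inv_mul]

/-- Real Lipschitz stability (Theorem 3.1): with `φ 1 = e 1`,
`φ n = α n • e 1 + e n` (`n ≥ 2`), for all `f, g` in the set `𝓑` we have
`inf_{α = ±1} ‖f - α g‖ ≤ (1-ε)^{-1/2} ‖𝒜_Φ f - 𝒜_Φ g‖`. -/
theorem stmt8 {H : Type*} [NormedAddCommGroup H] [InnerProductSpace ℝ H] [CompleteSpace H]
    (e : ℕ → H) (he : Orthonormal ℝ (fun i : {n : ℕ // 1 ≤ n} => e i))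
    (htotal : (Submodule.span ℝ (e '' {n | 1 ≤ n})).topologicalClosure = ⊤)
    (ε : ℝ) (hε0 : 0 < ε) (hε : ε < 8⁻¹)
    (α : ℕ → ℝ) (hαanti : Antitone α) (hαlim : Filter.Tendsto α Filter.atTop (nhds 0))
    (hαsum : Summable fun n => α (n + 2)) (hαε : ∑' n, α (n + 2) < ε / 2)
    (β : ℕ → ℝ) (hβanti : Antitone β) (hβlim : Filter.Tendsto β Filter.atTop (nhds 0))
    (hβα : ∀ n, 1 ≤ n → β n < 2⁻¹ * α n)
    (φ : ℕ → H) (hφ1 : φ 1 = e 1) (hφ : ∀ n, 2 ≤ n → φ n = α n • e 1 + e n)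
    (f g : H)
    (hf : ∀ m, 1 ≤ m →
      infDist f (Submodule.span ℝ (e '' {i | 1 ≤ i ∧ i ≤ m}) : Set H) ≤ β (m + 1) * ‖f‖)
    (hg : ∀ m, 1 ≤ m →
      infDist g (Submodule.span ℝ (e '' {i | 1 ≤ i ∧ i ≤ m}) : Set H) ≤ β (m + 1) * ‖g‖) :
    min ‖f - g‖ ‖f + g‖ ≤ (1 - ε) ^ (-(1 / 2 : ℝ)) *
      Real.sqrt (∑' n, (|(inner ℝ (φ (n + 1)) f : ℝ)| - |(inner ℝ (φ (n + 1)) g : ℝ)|) ^ 2) := by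
  have hα0 : ∀ n, 0 ≤ α n := hαanti.le_of_tendsto hαlim
  have hβ2 : β 2 ≤ 1 / 32 := by
    have hα2 : α 2 ≤ ∑' n, α (n + 2) := Summable.le_tsum hαsum 0 fun j _ => hα0 _
    have := hβα 2 (by omega)
    rw [show (8:ℝ)⁻¹ = 1/8 by norm_num] at hε
    linarith
  -- orthogonality of `e n` to the span of earlier basis vectors
  have horth : ∀ n : ℕ, 1 ≤ n → ∀ m : ℕ, m < n →
      ∀ y ∈ Submodule.span ℝ (e '' {i | 1 ≤ i ∧ i ≤ m}), (inner ℝ (e n) y : ℝ) = 0 := by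
    intro n hn m hm y hy
    induction hy using Submodule.span_induction with
    | mem z hz =>
        obtain ⟨i, hi, rfl⟩ := hz
        simp only [Set.mem_setOf_eq] at hi
        have hne : (⟨n, hn⟩ : {k : ℕ // 1 ≤ k}) ≠ ⟨i, hi.1⟩ := by
          intro hEq
          have := congrArg Subtype.val hEq
          simp only at this
          omega
        exact he.2 hne
    | zero => exact inner_zero_right _
    | add x y _ _ hx hy => rw [inner_add_right, hx, hy, add_zero]
    | smul a x _ hx => rw [real_inner_smul_right, hx, mul_zero]
  -- C1: coefficient decay
  have hC1 : ∀ x : H, (∀ m, 1 ≤ m →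
      infDist x (Submodule.span ℝ (e '' {i | 1 ≤ i ∧ i ≤ m}) : Set H) ≤ β (m + 1) * ‖x‖) →
      ∀ n, 2 ≤ n → |(inner ℝ (e n) x : ℝ)| ≤ β n * ‖x‖ := by
    intro x hx n hn
    set S : Set H := (Submodule.span ℝ (e '' {i | 1 ≤ i ∧ i ≤ n - 1}) : Set H) with hS_def
    have hS : S.Nonempty := ⟨0, by exact Submodule.zero_mem _⟩
    have hbound : ∀ y ∈ S, |(inner ℝ (e n) x : ℝ)| ≤ dist x y := by
      intro y hy
      have h0 : (inner ℝ (e n) y : ℝ) = 0 := horth n (by omega) (n - 1) (by omega) y hy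
      calc |(inner ℝ (e n) x : ℝ)| = |(inner ℝ (e n) (x - y) : ℝ)| := by
            rw [inner_sub_right, h0, sub_zero]
        _ ≤ ‖e n‖ * ‖x - y‖ := by
            rw [← Real.norm_eq_abs]; exact norm_inner_le_norm _ _
        _ = dist x y := by rw [he.1 ⟨n, by omega⟩, one_mul, dist_eq_norm]
    have hle : |(inner ℝ (e n) x : ℝ)| ≤ infDist x S := by
      by_contra hcon
      push_neg at hcon
      obtain ⟨y, hyS, hylt⟩ := (infDist_lt_iff hS).1 hcon
      exact absurd (hbound y hyS) (by linarith)
    have := hx (n - 1) (by omega)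
    rw [show n - 1 + 1 = n by omega] at this
    exact hle.trans this
  -- C2: concentration on the first coordinate
  have hC2 : ∀ x : H, (∀ m, 1 ≤ m →
      infDist x (Submodule.span ℝ (e '' {i | 1 ≤ i ∧ i ≤ m}) : Set H) ≤ β (m + 1) * ‖x‖) →
      ‖x‖ ≤ 2 * |(inner ℝ (e 1) x : ℝ)| := by
    intro x hx
    have hset : {i : ℕ | 1 ≤ i ∧ i ≤ 1} = {1} := by ext i; simp; omega
    set S : Set H := (Submodule.span ℝ (e '' {i | 1 ≤ i ∧ i ≤ 1}) : Set H) with hS_def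
    have hS : S.Nonempty := ⟨0, by exact Submodule.zero_mem _⟩
    apply le_of_forall_pos_le_add
    intro δ hδ
    have h1 : infDist x S < β 2 * ‖x‖ + δ / 4 := lt_of_le_of_lt (hx 1 le_rfl) (by linarith)
    obtain ⟨y, hyS, hylt⟩ := (infDist_lt_iff hS).1 h1
    have hymem : y ∈ Submodule.span ℝ {e 1} := by
      have : y ∈ Submodule.span ℝ (e '' {i | 1 ≤ i ∧ i ≤ 1}) := hyS
      rwa [hset, Set.image_singleton] at this
    obtain ⟨t, rfl⟩ := Submodule.mem_span_singleton.1 hymem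
    have he1 : ‖e 1‖ = 1 := he.1 ⟨1, le_rfl⟩
    have hny : ‖t • e 1‖ = |t| := by rw [norm_smul, he1, mul_one, Real.norm_eq_abs]
    have hd : ‖x - t • e 1‖ < β 2 * ‖x‖ + δ / 4 := by rwa [dist_eq_norm] at hylt
    have hat : |(inner ℝ (e 1) x : ℝ) - t| ≤ ‖x - t • e 1‖ := by
      have : (inner ℝ (e 1) (x - t • e 1) : ℝ) = (inner ℝ (e 1) x : ℝ) - t := by
        rw [inner_sub_right, real_inner_smul_right, real_inner_self_eq_norm_sq, he1]
        ring
      calc |(inner ℝ (e 1) x : ℝ) - t| = |(inner ℝ (e 1) (x - t • e 1) : ℝ)| := by rw [this]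
        _ ≤ ‖e 1‖ * ‖x - t • e 1‖ := by
            rw [← Real.norm_eq_abs]; exact norm_inner_le_norm _ _
        _ = ‖x - t • e 1‖ := by rw [he1, one_mul]
    have htx : ‖x‖ - ‖x - t • e 1‖ ≤ |t| := by
      rw [← hny]
      have := norm_sub_norm_le x (t • e 1)
      linarith
    have habs : |t| - |(inner ℝ (e 1) x : ℝ)| ≤ |t - (inner ℝ (e 1) x : ℝ)| :=
      abs_sub_abs_le_abs_sub _ _
    rw [abs_sub_comm] at habs
    have hβx : β 2 * ‖x‖ ≤ (1 / 32) * ‖x‖ := mul_le_mul_of_nonneg_right hβ2 (norm_nonneg x)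
    have hx0 := norm_nonneg x
    linarith
  have hfC1 := hC1 f hf
  have hgC1 := hC1 g hg
  have hfC2 := hC2 f hf
  have hgC2 := hC2 g hg
  -- sign-flipped versions of the hypotheses
  have hC1neg : ∀ x : H, (∀ n, 2 ≤ n → |(inner ℝ (e n) x : ℝ)| ≤ β n * ‖x‖) →
      ∀ n, 2 ≤ n → |(inner ℝ (e n) (-x) : ℝ)| ≤ β n * ‖-x‖ := by
    intro x h n hn
    simpa [inner_neg_right, norm_neg] using h n hn
  rcases le_or_gt 0 (inner ℝ (e 1) f : ℝ) with ha | ha <;>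
    rcases le_or_gt 0 (inner ℝ (e 1) g : ℝ) with hb | hb
  · -- a ≥ 0, b ≥ 0
    have h2f : ‖f‖ ≤ 2 * (inner ℝ (e 1) f : ℝ) := by rwa [abs_of_nonneg ha] at hfC2
    have h2g : ‖g‖ ≤ 2 * (inner ℝ (e 1) g : ℝ) := by rwa [abs_of_nonneg hb] at hgC2
    exact stmt8_key e he htotal ε hε0 hε α hα0 hαanti hαsum hαε β hβα φ hφ1 hφ f g
      hfC1 hgC1 h2f h2g
  · -- a ≥ 0, b < 0 : use (f, -g)
    have h2f : ‖f‖ ≤ 2 * (inner ℝ (e 1) f : ℝ) := by rwa [abs_of_nonneg ha] at hfC2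
    have h2g : ‖-g‖ ≤ 2 * (inner ℝ (e 1) (-g) : ℝ) := by
      rw [norm_neg, inner_neg_right]
      rwa [abs_of_neg hb] at hgC2
    have key := stmt8_key e he htotal ε hε0 hε α hα0 hαanti hαsum hαε β hβα φ hφ1 hφ f (-g)
      hfC1 (hC1neg g hgC1) h2f h2g
    simp only [inner_neg_right, abs_neg, sub_neg_eq_add, ← sub_eq_add_neg] at key
    rwa [min_comm] at key
  · -- a < 0, b ≥ 0 : use (-f, g)
    have h2f : ‖-f‖ ≤ 2 * (inner ℝ (e 1) (-f) : ℝ) := by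
      rw [norm_neg, inner_neg_right]
      rwa [abs_of_neg ha] at hfC2
    have h2g : ‖g‖ ≤ 2 * (inner ℝ (e 1) g : ℝ) := by rwa [abs_of_nonneg hb] at hgC2
    have key := stmt8_key e he htotal ε hε0 hε α hα0 hαanti hαsum hαε β hβα φ hφ1 hφ (-f) g
      (hC1neg f hfC1) hgC1 h2f h2g
    rw [show -f - g = -(f + g) by abel, show -f + g = -(f - g) by abel, norm_neg, norm_neg,
      min_comm] at key
    simpa only [inner_neg_right, abs_neg] using key
  · -- a < 0, b < 0 : use (-f, -g)
    have h2f : ‖-f‖ ≤ 2 * (inner ℝ (e 1) (-f) : ℝ) := by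
      rw [norm_neg, inner_neg_right]
      rwa [abs_of_neg ha] at hfC2
    have h2g : ‖-g‖ ≤ 2 * (inner ℝ (e 1) (-g) : ℝ) := by
      rw [norm_neg, inner_neg_right]
      rwa [abs_of_neg hb] at hgC2
    have key := stmt8_key e he htotal ε hε0 hε α hα0 hαanti hαsum hαε β hβα φ hφ1 hφ (-f) (-g)
      (hC1neg f hfC1) (hC1neg g hgC1) h2f h2g
    rw [show -f - -g = -(f - g) by abel, show -f + -g = -(f + g) by abel, norm_neg,
      norm_neg] at key
    simpa only [inner_neg_right, abs_neg] using key
end
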